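/- Let x_k be a real-valued random variable and y_0, …, y_k real-valued random variables (side information), and let x̂_k = f_k(y_0, …, y_k) for a measurable function f_k : ℝ^{k+1} → ℝ. Assume the estimation error x_k − x̂_k has a probability density function with compact support, and that the differential entropies appearing below are well defined and finite. Then the length of the support of x_k − x̂_k satisfies |supp(x_k − x̂_k)| ≥ 2^{h(x_k | y_0,…,y_k)}, and equality holds if and only if x_k − x̂_k is uniformly distributed on its support and I(x_k − x̂_k; (y_0,…,y_k)) = 0. -/

import Mathlib

open MeasureTheory Filter ProbabilityTheory

noncomputable section

/-- Differential entropy (base 2) of a random variable `X : Ω → E` under `P`,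
computed from the density of its distribution w.r.t. the reference (volume) measure. -/
def dEnt {Ω E : Type*} [MeasurableSpace Ω] [MeasureSpace E]
    (P : Measure Ω) (X : Ω → E) : ℝ :=
  -∫ t, ((P.map X).rnDeriv volume t).toReal * Real.logb 2 ((P.map X).rnDeriv volume t).toReal

/-- Conditional differential entropy `h(X | Y) = h(X, Y) - h(Y)`. -/
def condEnt {Ω E F : Type*} [MeasurableSpace Ω] [MeasureSpace E] [MeasureSpace F]
    (P : Measure Ω) (X : Ω → E) (Y : Ω → F) : ℝ :=
  dEnt P (fun ω => (X ω, Y ω)) - dEnt P Y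

/-- Mutual information `I(X; Y) = h(X) + h(Y) - h(X, Y)`. -/
def mutInfo {Ω E F : Type*} [MeasurableSpace Ω] [MeasureSpace E] [MeasureSpace F]
    (P : Measure Ω) (X : Ω → E) (Y : Ω → F) : ℝ :=
  dEnt P X + dEnt P Y - dEnt P (fun ω => (X ω, Y ω))

/-- Conditional mutual information `I(X; Y | Z) = h(X | Z) - h(X | Y, Z)`. -/
def condMutInfo {Ω E F G : Type*} [MeasurableSpace Ω] [MeasureSpace E] [MeasureSpace F]
    [MeasureSpace G] (P : Measure Ω) (X : Ω → E) (Y : Ω → F) (Z : Ω → G) : ℝ :=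
  condEnt P X Z - condEnt P X (fun ω => (Y ω, Z ω))

/-- The differential entropy of `X` is well defined (a density exists and the
entropy integral converges). -/
def entWellDef {Ω E : Type*} [MeasurableSpace Ω] [MeasureSpace E]
    (P : Measure Ω) (X : Ω → E) : Prop :=
  HasPDF X P volume ∧
    Integrable (fun t =>
      ((P.map X).rnDeriv volume t).toReal * Real.logb 2 ((P.map X).rnDeriv volume t).toReal)

/-- The (topological) support of the distribution of a real random variable. -/
def mSupp {Ω : Type*} [MeasurableSpace Ω] (P : Measure Ω) (X : Ω → ℝ) : Set ℝ :=
  {e | ∀ U ∈ nhds e, P.map X U ≠ 0}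

/-- The length (Lebesgue measure) of the support of the distribution of `X`. -/
def suppLen {Ω : Type*} [MeasurableSpace Ω] (P : Measure Ω) (X : Ω → ℝ) : ℝ :=
  (volume (mSupp P X)).toReal

/-- Maximum deviation of `X` from its mean, over the support of its distribution. -/
def Dmax {Ω : Type*} [MeasurableSpace Ω] (P : Measure Ω) (X : Ω → ℝ) : ℝ :=
  sSup ((fun e => |e - ∫ ω, X ω ∂P|) '' mSupp P X)

/-- `X` is uniformly distributed on the support of its distribution. -/
def UnifOnSupp {Ω : Type*} [MeasurableSpace Ω] (P : Measure Ω) (X : Ω → ℝ) : Prop :=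
  pdf.IsUniform X (mSupp P X) P

end

/-!
Write `ẽ = x - f(Y)`. The shear `(a, b) ↦ (a + f b, b)` preserves Lebesgue measure, so
`h(x, Y) = h(ẽ, Y)` and therefore `h(x | Y) = h(ẽ) - I(ẽ; Y)`. Both terms are controlled
by Gibbs' inequality `∫ p log q ≤ ∫ p log p` for probability densities `p`, `q`: against
the uniform density on the support `S` of `ẽ` it gives `h(ẽ) ≤ log₂ |S|`, with equality
iff `ẽ` is uniform on `S`; against the product of the marginal densities it gives
`I(ẽ; Y) ≥ 0`. Hence `h(x | Y) ≤ log₂ |S|`, with equality iff both inequalities are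
equalities.
-/

open Real InformationTheory
open scoped ENNReal

lemma mul_log_le_mul_log_add_sub {a b : ℝ} (ha : 0 ≤ a) (hb : 0 ≤ b) (hab : b = 0 → a = 0) :
    a * log b ≤ a * log a + (b - a) ∧ (a * log b = a * log a + (b - a) ↔ a = b) := by
  rcases hb.eq_or_lt with rfl | hb
  · simp [hab rfl]
  have hgap : a * log a + (b - a) - a * log b = b * klFun (a / b) := by
    rcases ha.eq_or_lt with rfl | ha
    · simp [klFun]
    · rw [klFun_apply, log_div ha.ne' hb.ne']
      field_simp
      ring
  have hkl := klFun_nonneg (div_nonneg ha hb.le)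
  refine ⟨by nlinarith, ?_⟩
  rw [eq_comm, ← sub_eq_zero, hgap, mul_eq_zero,
    klFun_eq_zero_iff (div_nonneg ha hb.le), div_eq_one_iff_eq hb.ne']
  simp [hb.ne']

section Gibbs

variable {α : Type*} [MeasurableSpace α] {ν : Measure α}

theorem integral_mul_log_le_integral_mul_log {p q : α → ℝ} (hp : 0 ≤ p) (hq : 0 ≤ q)
    (hsupp : ∀ᵐ t ∂ν, q t = 0 → p t = 0) (hpi : Integrable p ν) (hqi : Integrable q ν)
    (hmass : ∫ t, q t ∂ν = ∫ t, p t ∂ν)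
    (hplogp : Integrable (fun t => p t * log (p t)) ν)
    (hplogq : Integrable (fun t => p t * log (q t)) ν) :
    ∫ t, p t * log (q t) ∂ν ≤ ∫ t, p t * log (p t) ∂ν ∧
      (∫ t, p t * log (q t) ∂ν = ∫ t, p t * log (p t) ∂ν ↔ p =ᵐ[ν] q) := by
  set gap : α → ℝ := fun t => p t * log (p t) + (q t - p t) - p t * log (q t)
  have hgap : ∀ᵐ t ∂ν, 0 ≤ gap t ∧ (gap t = 0 ↔ p t = q t) := by
    filter_upwards [hsupp] with t ht
    obtain ⟨hle, hiff⟩ := mul_log_le_mul_log_add_sub (hp t) (hq t) ht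
    exact ⟨sub_nonneg.2 hle, sub_eq_zero.trans (eq_comm.trans hiff)⟩
  have hgap_nonneg : 0 ≤ᵐ[ν] gap := hgap.mono fun t ht => ht.1
  have hdiff_int : Integrable (fun t => q t - p t) ν := hqi.sub hpi
  have hsum_int : Integrable (fun t => p t * log (p t) + (q t - p t)) ν :=
    hplogp.add hdiff_int
  have hgap_int : Integrable gap ν := hsum_int.sub hplogq
  have hgap_eq :
      ∫ t, gap t ∂ν = ∫ t, p t * log (p t) ∂ν - ∫ t, p t * log (q t) ∂ν := by
    simp only [gap]
    rw [integral_sub hsum_int hplogq, integral_add hplogp hdiff_int, integral_sub hqi hpi,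
      hmass, sub_self, add_zero]
  refine ⟨sub_nonneg.1 (hgap_eq ▸ integral_nonneg_of_ae hgap_nonneg), ?_⟩
  calc _ ↔ ∫ t, gap t ∂ν = 0 := by rw [hgap_eq, sub_eq_zero, eq_comm]
    _ ↔ gap =ᵐ[ν] 0 := integral_eq_zero_iff_of_nonneg_ae hgap_nonneg hgap_int
    _ ↔ p =ᵐ[ν] q := by
      constructor <;> intro h <;> filter_upwards [h, hgap] with t ht hgt
      · exact hgt.2.1 ht
      · exact hgt.2.2 ht

end Gibbs

section DiffEntropy

variable {α : Type*} [MeasurableSpace α]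

noncomputable def entropyIntegrand (μ ν : Measure α) (t : α) : ℝ :=
  negMulLog (μ.rnDeriv ν t).toReal

noncomputable def diffEntropy (μ ν : Measure α) : ℝ := ∫ t, entropyIntegrand μ ν t ∂ν

lemma entropyIntegrand_eq_neg_mul_log (μ ν : Measure α) :
    entropyIntegrand μ ν =
      -fun t => (μ.rnDeriv ν t).toReal * log (μ.rnDeriv ν t).toReal := by
  funext t
  simp [entropyIntegrand, negMulLog]

lemma entropyIntegrand_eq_mul_logb (μ ν : Measure α) :
    entropyIntegrand μ ν =
      fun t => -log 2 * ((μ.rnDeriv ν t).toReal * logb 2 (μ.rnDeriv ν t).toReal) := by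
  rw [entropyIntegrand_eq_neg_mul_log]
  funext t
  have : log 2 ≠ 0 := (log_pos one_lt_two).ne'
  simp only [Pi.neg_apply, logb]
  field_simp

variable {μ ν : Measure α} [SigmaFinite μ] [SigmaFinite ν]

lemma ae_toReal_rnDeriv_pos (hμν : μ ≪ ν) : ∀ᵐ t ∂μ, 0 < (μ.rnDeriv ν t).toReal := by
  filter_upwards [Measure.rnDeriv_pos hμν, hμν.ae_le (Measure.rnDeriv_lt_top μ ν)]
    with t h0 htop
  exact ENNReal.toReal_pos h0.ne' htop.ne

lemma integrable_entropyIntegrand_iff (hμν : μ ≪ ν) :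
    Integrable (entropyIntegrand μ ν) ν ↔
      Integrable (fun t => log (μ.rnDeriv ν t).toReal) μ := by
  rw [entropyIntegrand_eq_neg_mul_log, integrable_neg_iff,
    integrable_toReal_rnDeriv_mul_iff hμν]

lemma diffEntropy_eq_neg_integral_log (hμν : μ ≪ ν) :
    diffEntropy μ ν = -∫ t, log (μ.rnDeriv ν t).toReal ∂μ := by
  rw [diffEntropy, entropyIntegrand_eq_neg_mul_log, integral_neg',
    integral_toReal_rnDeriv_mul hμν]

end DiffEntropy

section MaxEntropy

variable {α : Type*} [MeasurableSpace α] {ν : Measure α} [SigmaFinite ν]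

theorem diffEntropy_le_log_measure {μ : Measure α} [IsProbabilityMeasure μ] (hμν : μ ≪ ν)
    (hint : Integrable (entropyIntegrand μ ν) ν) {S : Set α} (hS : MeasurableSet S)
    (hμS : μ Sᶜ = 0) (hνS : ν S ≠ ∞) :
    diffEntropy μ ν ≤ log (ν S).toReal ∧
      (diffEntropy μ ν = log (ν S).toReal ↔ μ = cond ν S) := by
  set g := μ.rnDeriv ν
  set u : α → ℝ≥0∞ := S.indicator fun _ => (ν S)⁻¹
  set L := (ν S).toReal
  have hνS0 : ν S ≠ 0 := fun h => by
    simpa [(prob_compl_eq_zero_iff hS).1 hμS] using hμν h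
  have hL : 0 < L := ENNReal.toReal_pos hνS0 hνS
  have hcond : cond ν S = ν.withDensity u := by
    rw [withDensity_indicator hS, withDensity_const]
    rfl
  have hu_top : ∀ t, u t ≠ ∞ := fun t => by
    by_cases ht : t ∈ S <;> simp [u, ht, hνS0]
  have hu_real : ∀ t, (u t).toReal = S.indicator (fun _ => L⁻¹) t := fun t => by
    by_cases ht : t ∈ S <;> simp [u, L, ht]
  have hg_off : ∀ᵐ t ∂ν, t ∉ S → g t = 0 := by
    filter_upwards [Measure.ae_rnDeriv_ne_zero_imp_of_ae ν (ae_iff.2 hμS)] with t ht hts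
    by_contra h
    exact hts (ht h)
  have hpi : Integrable (fun t => (g t).toReal) ν := Measure.integrable_toReal_rnDeriv
  have hcross :
      (fun t => (g t).toReal * log (u t).toReal) =ᵐ[ν] fun t => (g t).toReal * -log L := by
    filter_upwards [hg_off] with t ht
    by_cases hts : t ∈ S
    · rw [hu_real, Set.indicator_of_mem hts, log_inv]
    · simp [ht hts]
  obtain ⟨hle, hiff⟩ := integral_mul_log_le_integral_mul_log (ν := ν)
    (p := fun t => (g t).toReal) (q := fun t => (u t).toReal)
    (fun _ => ENNReal.toReal_nonneg) (fun _ => ENNReal.toReal_nonneg)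
    (by
      filter_upwards [hg_off] with t ht hq0
      rw [hu_real, Set.indicator_apply_eq_zero] at hq0
      simp [ht fun hts => inv_ne_zero hL.ne' (hq0 hts)])
    hpi
    (by simpa only [hu_real] using (integrable_indicator_iff hS).2 (integrableOn_const hνS))
    (by
      simp only [hu_real, integral_indicator_const _ hS]
      rw [Measure.integral_toReal_rnDeriv hμν]
      simp [Measure.real, L, hL.ne'])
    (by simpa [entropyIntegrand_eq_neg_mul_log] using hint.neg)
    ((hpi.mul_const _).congr hcross.symm)
  rw [integral_congr_ae hcross, integral_mul_const, Measure.integral_toReal_rnDeriv hμν,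
    probReal_univ, one_mul] at hle hiff
  have hent : diffEntropy μ ν = -∫ t, (g t).toReal * log (g t).toReal ∂ν := by
    rw [diffEntropy, entropyIntegrand_eq_neg_mul_log, integral_neg']
  refine ⟨by linarith, ?_⟩
  calc diffEntropy μ ν = log L ↔ -log L = ∫ t, (g t).toReal * log (g t).toReal ∂ν := by
        constructor <;> intro h <;> linarith
    _ ↔ (fun t => (g t).toReal) =ᵐ[ν] fun t => (u t).toReal := hiff
    _ ↔ g =ᵐ[ν] u := by
        constructor <;> intro h
        · filter_upwards [h, Measure.rnDeriv_lt_top μ ν] with t ht hgt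
          exact (ENNReal.toReal_eq_toReal_iff' hgt.ne (hu_top t)).1 ht
        · filter_upwards [h] with t ht
          rw [ht]
    _ ↔ μ = cond ν S := by
        rw [hcond, ← withDensity_eq_iff_of_sigmaFinite
          (Measure.measurable_rnDeriv μ ν).aemeasurable
          (measurable_const.indicator hS).aemeasurable, Measure.withDensity_rnDeriv_eq μ ν hμν]

end MaxEntropy

section Subadditivity

variable {α β : Type*} [MeasurableSpace α] [MeasurableSpace β]
  {ν₁ : Measure α} {ν₂ : Measure β} [SigmaFinite ν₁] [SigmaFinite ν₂]

theorem diffEntropy_le_add {ρ : Measure (α × β)} [IsProbabilityMeasure ρ]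
    (hρ : ρ ≪ ν₁.prod ν₂)
    (h₁ : Integrable (entropyIntegrand (ρ.map Prod.fst) ν₁) ν₁)
    (h₂ : Integrable (entropyIntegrand (ρ.map Prod.snd) ν₂) ν₂)
    (h : Integrable (entropyIntegrand ρ (ν₁.prod ν₂)) (ν₁.prod ν₂)) :
    diffEntropy ρ (ν₁.prod ν₂) ≤
      diffEntropy (ρ.map Prod.fst) ν₁ + diffEntropy (ρ.map Prod.snd) ν₂ := by
  set ρ₁ := ρ.map Prod.fst
  set ρ₂ := ρ.map Prod.snd
  have hρ₁ : ρ₁ ≪ ν₁ :=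
    (hρ.map measurable_fst).trans Measure.quasiMeasurePreserving_fst.absolutelyContinuous
  have hρ₂ : ρ₂ ≪ ν₂ :=
    (hρ.map measurable_snd).trans Measure.quasiMeasurePreserving_snd.absolutelyContinuous
  have : IsProbabilityMeasure ρ₁ := Measure.isProbabilityMeasure_map measurable_fst.aemeasurable
  have : IsProbabilityMeasure ρ₂ := Measure.isProbabilityMeasure_map measurable_snd.aemeasurable
  set g₁ : α → ℝ := fun a => (ρ₁.rnDeriv ν₁ a).toReal
  set g₂ : β → ℝ := fun b => (ρ₂.rnDeriv ν₂ b).toReal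
  set q : α × β → ℝ := fun z => g₁ z.1 * g₂ z.2
  have hm₁ : Measurable fun a => log (g₁ a) :=
    (Measure.measurable_rnDeriv _ _).ennreal_toReal.log
  have hm₂ : Measurable fun b => log (g₂ b) :=
    (Measure.measurable_rnDeriv _ _).ennreal_toReal.log
  have hq_pos : ∀ᵐ z ∂ρ, 0 < g₁ z.1 ∧ 0 < g₂ z.2 :=
    (ae_of_ae_map measurable_fst.aemeasurable (ae_toReal_rnDeriv_pos hρ₁)).and
      (ae_of_ae_map measurable_snd.aemeasurable (ae_toReal_rnDeriv_pos hρ₂))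
  have hlog₁ : Integrable (fun z => log (g₁ z.1)) ρ :=
    (integrable_map_measure hm₁.aestronglyMeasurable measurable_fst.aemeasurable).1
      ((integrable_entropyIntegrand_iff hρ₁).1 h₁)
  have hlog₂ : Integrable (fun z => log (g₂ z.2)) ρ :=
    (integrable_map_measure hm₂.aestronglyMeasurable measurable_snd.aemeasurable).1
      ((integrable_entropyIntegrand_iff hρ₂).1 h₂)
  have hlog_q : (fun z => log (q z)) =ᵐ[ρ] fun z => log (g₁ z.1) + log (g₂ z.2) := by
    filter_upwards [hq_pos] with z hz
    exact log_mul hz.1.ne' hz.2.ne'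
  have hcross_int :
      Integrable (fun z => (ρ.rnDeriv (ν₁.prod ν₂) z).toReal * log (q z))
        (ν₁.prod ν₂) :=
    (integrable_toReal_rnDeriv_mul_iff hρ).2 ((hlog₁.add hlog₂).congr hlog_q.symm)
  have hcross : ∫ z, (ρ.rnDeriv (ν₁.prod ν₂) z).toReal * log (q z) ∂(ν₁.prod ν₂) =
      -(diffEntropy ρ₁ ν₁ + diffEntropy ρ₂ ν₂) := by
    rw [integral_toReal_rnDeriv_mul hρ, integral_congr_ae hlog_q, integral_add hlog₁ hlog₂,
      diffEntropy_eq_neg_integral_log hρ₁, diffEntropy_eq_neg_integral_log hρ₂,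
      integral_map measurable_fst.aemeasurable hm₁.aestronglyMeasurable,
      integral_map measurable_snd.aemeasurable hm₂.aestronglyMeasurable]
    ring
  obtain ⟨hle, -⟩ := integral_mul_log_le_integral_mul_log (ν := ν₁.prod ν₂)
    (p := fun z => (ρ.rnDeriv (ν₁.prod ν₂) z).toReal) (q := q)
    (fun _ => ENNReal.toReal_nonneg)
    (fun _ => mul_nonneg ENNReal.toReal_nonneg ENNReal.toReal_nonneg)
    (by
      filter_upwards [Measure.ae_rnDeriv_ne_zero_imp_of_ae (ν₁.prod ν₂) hq_pos] with z hz hq0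
      by_contra hp0
      obtain ⟨hpos₁, hpos₂⟩ := hz fun h0 => hp0 (by simp [h0])
      exact (mul_pos hpos₁ hpos₂).ne' hq0)
    Measure.integrable_toReal_rnDeriv
    (Measure.integrable_toReal_rnDeriv.mul_prod Measure.integrable_toReal_rnDeriv)
    (by rw [integral_prod_mul, Measure.integral_toReal_rnDeriv hρ₁,
      Measure.integral_toReal_rnDeriv hρ₂, Measure.integral_toReal_rnDeriv hρ]; simp)
    (by simpa [entropyIntegrand_eq_neg_mul_log] using h.neg)
    hcross_int
  rw [hcross] at hle
  rw [diffEntropy, entropyIntegrand_eq_neg_mul_log, integral_neg']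
  linarith

end Subadditivity

theorem diffEntropy_map_of_measurePreserving {α : Type*} [MeasurableSpace α] {ν : Measure α}
    [SigmaFinite ν] (μ : Measure α) [SigmaFinite μ] {T : α → α}
    (hT : MeasurePreserving T ν ν) (hTe : MeasurableEmbedding T) :
    diffEntropy (μ.map T) ν = diffEntropy μ ν := by
  rw [diffEntropy, ← hT.integral_comp hTe]
  refine integral_congr_ae ?_
  filter_upwards [hTe.rnDeriv_map μ ν] with t ht
  rw [hT.map_eq] at ht
  simp only [entropyIntegrand, ht]

section Shear

variable {G β : Type*} [AddGroup G] [MeasurableSpace G] [MeasurableAdd₂ G] [MeasurableSub₂ G]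
  [MeasurableSpace β]

def shearEquiv (f : β → G) (hf : Measurable f) : G × β ≃ᵐ G × β where
  toFun z := (z.1 + f z.2, z.2)
  invFun z := (z.1 - f z.2, z.2)
  left_inv z := by simp
  right_inv z := by simp
  measurable_toFun := (measurable_fst.add (hf.comp measurable_snd)).prodMk measurable_snd
  measurable_invFun := (measurable_fst.sub (hf.comp measurable_snd)).prodMk measurable_snd

theorem measurePreserving_shearEquiv (f : β → G) (hf : Measurable f) (μ : Measure G)
    [μ.IsAddRightInvariant] [SFinite μ] (ν : Measure β) [SFinite ν] :
    MeasurePreserving (shearEquiv f hf) (μ.prod ν) (μ.prod ν) := by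
  refine ⟨(shearEquiv f hf).measurable, Measure.ext fun s hs => ?_⟩
  rw [Measure.map_apply (shearEquiv f hf).measurable hs,
    Measure.prod_apply_symm ((shearEquiv f hf).measurable hs), Measure.prod_apply_symm hs]
  exact lintegral_congr fun b => measure_preimage_add_right μ (f b) ((fun a => (a, b)) ⁻¹' s)

end Shear

section DifferentialEntropy

variable {Ω E : Type*} [MeasurableSpace Ω] [MeasureSpace E] {P : Measure Ω} {X : Ω → E}

lemma dEnt_eq_diffEntropy_div_log_two :
    dEnt P X = diffEntropy (P.map X) volume / log 2 := by
  rw [diffEntropy, entropyIntegrand_eq_mul_logb, integral_const_mul, dEnt]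
  field_simp [(log_pos one_lt_two).ne']

lemma entWellDef.integrable_entropyIntegrand (h : entWellDef P X) :
    Integrable (entropyIntegrand (P.map X) volume) := by
  rw [entropyIntegrand_eq_mul_logb]
  exact h.2.const_mul _

theorem dEnt_comp_of_measurePreserving [IsFiniteMeasure P] [SigmaFinite (volume : Measure E)]
    {T : E → E} (hT : MeasurePreserving T) (hTe : MeasurableEmbedding T)
    (hX : AEMeasurable X P) :
    dEnt P (T ∘ X) = dEnt P X := by
  rw [dEnt_eq_diffEntropy_div_log_two, dEnt_eq_diffEntropy_div_log_two,
    ← AEMeasurable.map_map_of_aemeasurable hTe.measurable.aemeasurable hX,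
    diffEntropy_map_of_measurePreserving _ hT hTe]

theorem dEnt_le_logb_volume [IsProbabilityMeasure P] [SigmaFinite (volume : Measure E)]
    (hX : entWellDef P X) {S : Set E} (hS : MeasurableSet S) (hXS : P.map X Sᶜ = 0)
    (hSfin : volume S ≠ ∞) :
    dEnt P X ≤ logb 2 (volume S).toReal ∧
      (dEnt P X = logb 2 (volume S).toReal ↔ pdf.IsUniform X S P) := by
  have := hX.1
  have := Measure.isProbabilityMeasure_map (HasPDF.aemeasurable X P volume)
  obtain ⟨hle, hiff⟩ := diffEntropy_le_log_measure HasPDF.absolutelyContinuous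
    hX.integrable_entropyIntegrand hS hXS hSfin
  have hlog2 := log_pos one_lt_two
  rw [dEnt_eq_diffEntropy_div_log_two, logb]
  exact ⟨div_le_div_of_nonneg_right hle hlog2.le, (div_left_inj' hlog2.ne').trans hiff⟩

theorem mutInfo_nonneg {F : Type*} [MeasureSpace F] [IsProbabilityMeasure P]
    [SigmaFinite (volume : Measure E)] [SigmaFinite (volume : Measure F)] {Y : Ω → F}
    (hX : entWellDef P X) (hY : entWellDef P Y) (hXY : entWellDef P fun ω => (X ω, Y ω)) :
    0 ≤ mutInfo P X Y := by
  have := hXY.1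
  have hm := HasPDF.aemeasurable (fun ω => (X ω, Y ω)) P volume
  have := Measure.isProbabilityMeasure_map hm
  have hfst : (P.map fun ω => (X ω, Y ω)).map Prod.fst = P.map X :=
    AEMeasurable.map_map_of_aemeasurable measurable_fst.aemeasurable hm
  have hsnd : (P.map fun ω => (X ω, Y ω)).map Prod.snd = P.map Y :=
    AEMeasurable.map_map_of_aemeasurable measurable_snd.aemeasurable hm
  have hle := diffEntropy_le_add HasPDF.absolutelyContinuous
    (hfst ▸ hX.integrable_entropyIntegrand) (hsnd ▸ hY.integrable_entropyIntegrand)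
    hXY.integrable_entropyIntegrand
  rw [hfst, hsnd] at hle
  rw [mutInfo, dEnt_eq_diffEntropy_div_log_two, dEnt_eq_diffEntropy_div_log_two,
    dEnt_eq_diffEntropy_div_log_two, ← add_div, ← sub_div]
  exact div_nonneg (sub_nonneg.2 hle) (log_pos one_lt_two).le

end DifferentialEntropy

lemma mSupp_eq_support {Ω : Type*} [MeasurableSpace Ω] (P : Measure Ω) (X : Ω → ℝ) :
    mSupp P X = (P.map X).support := by
  ext t
  simp [mSupp, Measure.mem_support_iff_forall, pos_iff_ne_zero]

lemma suppLen_pos {Ω : Type*} [MeasurableSpace Ω] {P : Measure Ω} [IsProbabilityMeasure P]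
    {X : Ω → ℝ} [HasPDF X P volume] (hX : IsCompact (mSupp P X)) : 0 < suppLen P X := by
  have := Measure.isProbabilityMeasure_map (HasPDF.aemeasurable X P volume)
  refine ENNReal.toReal_pos (fun h => ?_) hX.measure_lt_top.ne
  rw [mSupp_eq_support] at h
  have hnull : P.map X Set.univ = 0 := by
    rw [← Set.union_compl_self (P.map X).support]
    exact measure_union_null (HasPDF.absolutelyContinuous h) Measure.measure_compl_support
  simp at hnull

theorem support_length_estimation_bound_general
    {Ω : Type*} [MeasurableSpace Ω] (P : Measure Ω) [IsProbabilityMeasure P]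
    (k : ℕ) (x : Ω → ℝ) (f : (Fin (k + 1) → ℝ) → ℝ)
    (hf : Measurable f)
    (Y : Ω → Fin (k + 1) → ℝ)
    (e : Ω → ℝ) (he : e = fun ω => x ω - f (Y ω))
    -- the estimation error has a density with compact support
    (hcpt : IsCompact (mSupp P e))
    -- all differential entropies involved are well defined and finite
    (h₁ : entWellDef P e) (h₂ : entWellDef P Y)
    (h₄ : entWellDef P (fun ω => (e ω, Y ω))) :
    suppLen P e ≥ (2 : ℝ) ^ condEnt P x Y ∧
      (suppLen P e = (2 : ℝ) ^ condEnt P x Y ↔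
        UnifOnSupp P e ∧ mutInfo P e Y = 0) := by
  have := h₁.1
  have := h₄.1
  have hshear : (fun ω => (x ω, Y ω)) = shearEquiv f hf ∘ fun ω => (e ω, Y ω) := by
    funext ω
    simp [shearEquiv, he]
  have hxY : dEnt P (fun ω => (x ω, Y ω)) = dEnt P (fun ω => (e ω, Y ω)) := by
    rw [hshear]
    exact dEnt_comp_of_measurePreserving (measurePreserving_shearEquiv f hf volume volume)
      (shearEquiv f hf).measurableEmbedding (HasPDF.aemeasurable _ P volume)
  have hcond : condEnt P x Y = dEnt P e - mutInfo P e Y := by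
    rw [condEnt, mutInfo, hxY]
    ring
  obtain ⟨hmax, hunif⟩ := dEnt_le_logb_volume h₁
    (mSupp_eq_support P e ▸ Measure.isClosed_support.measurableSet)
    (mSupp_eq_support P e ▸ Measure.measure_compl_support) hcpt.measure_lt_top.ne
  have hMI := mutInfo_nonneg h₁ h₂ h₄
  have hL := suppLen_pos hcpt
  rw [ge_iff_le, ← le_logb_iff_rpow_le one_lt_two hL, eq_comm,
    ← logb_eq_iff_rpow_eq two_pos (by norm_num) hL, hcond, UnifOnSupp, ← hunif, suppLen]
  refine ⟨by linarith, fun h => ⟨by linarith, by linarith⟩, fun ⟨h, h'⟩ => by linarith⟩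

/-- Theorem 1 of the paper: generic bound on the support length of the
estimation error `x_k - f_k(y_0,…,y_k)`, with equality iff the error is uniform and
independent (zero mutual information) of the side information. -/
theorem support_length_estimation_bound
    {Ω : Type*} [MeasurableSpace Ω] (P : Measure Ω) [IsProbabilityMeasure P]
    (k : ℕ) (x : Ω → ℝ) (y : Fin (k + 1) → Ω → ℝ) (f : (Fin (k + 1) → ℝ) → ℝ)
    (hx : Measurable x) (hy : ∀ i, Measurable (y i)) (hf : Measurable f)
    (Y : Ω → Fin (k + 1) → ℝ) (hY : Y = fun ω i => y i ω)
    (e : Ω → ℝ) (he : e = fun ω => x ω - f (Y ω))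
    -- the estimation error has a density with compact support
    (hpdf : HasPDF e P volume) (hcpt : IsCompact (mSupp P e))
    -- all differential entropies involved are well defined and finite
    (h₁ : entWellDef P e) (h₂ : entWellDef P Y)
    (h₃ : entWellDef P (fun ω => (x ω, Y ω)))
    (h₄ : entWellDef P (fun ω => (e ω, Y ω))) :
    suppLen P e ≥ (2 : ℝ) ^ condEnt P x Y ∧
      (suppLen P e = (2 : ℝ) ^ condEnt P x Y ↔
        UnifOnSupp P e ∧ mutInfo P e Y = 0) :=
  support_length_estimation_bound_general P k x f hf Y e he hcpt h₁ h₂ h₄
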